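/- arXiv:1705.10466 — 2 statements merged into one kernel-verified Lean document; each statement's English description precedes it below -/
import Mathlib

section
/- Let 1/2 < H1 < 1 and 1/2 < H2 < 1 with H1 + H2 < 2, and let 0 < u ≤ v. Then ∫₀^u r^{1-H1-H2} (u-r)^{H1-3/2} (v-r)^{H2-3/2} dr = (v-u)^{H1+H2-2} · u^{1/2-H2} · v^{1/2-H1} · B(H1-1/2, 2-H1-H2), where B denotes the Beta function. -/
open MeasureTheory Set

noncomputable def Beta (a b : ℝ) : ℝ := ∫ t in Set.Ioo (0:ℝ) 1, t ^ (a-1) * (1-t) ^ (b-1)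

/-!
For `u < v` substitute `r = u v (1 - t) / (v - u t)`, a Möbius map of `(0, 1)` onto `(0, u)`.
Then `r`, `u - r` and `v - r` are monomials in `u, v, v - u, t, 1 - t` divided by `v - u t`, and
the Jacobian is `u v (v - u) / (v - u t) ^ 2`; as the three exponents add up to `-2`, the powers
of `v - u t` cancel and what is left is the Beta integral. For `u = v` the integrand behaves like
`(u - r) ^ (H1 + H2 - 3)` near `r = u`, so it is not integrable and both sides are `0`.
-/

lemma not_integrableOn_Ioo_sub_rpow {u a : ℝ} (hu : 0 < u) (ha : a ≤ -1) :
    ¬ IntegrableOn (fun r : ℝ => (u - r) ^ a) (Ioo 0 u) := by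
  intro h
  rw [← intervalIntegrable_iff_integrableOn_Ioo_of_le hu.le] at h
  have h' := (h.comp_sub_left u).symm
  simp only [sub_sub_cancel, sub_zero, sub_self] at h'
  rw [intervalIntegrable_iff_integrableOn_Ioo_of_le hu.le,
    intervalIntegral.integrableOn_Ioo_rpow_iff hu] at h'
  linarith

lemma not_integrableOn_Ioo_rpow_mul_sub_rpow {u p a : ℝ} (hu : 0 < u) (hp : p ≤ 0)
    (ha : a ≤ -1) : ¬ IntegrableOn (fun r : ℝ => r ^ p * (u - r) ^ a) (Ioo 0 u) := by
  intro h
  -- on `(0, u)` the factor `r ^ p` is bounded below by `u ^ p > 0`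
  have hdom : IntegrableOn (fun r : ℝ => u ^ p * (u - r) ^ a) (Ioo 0 u) := by
    refine h.mono' (Measurable.aestronglyMeasurable (by fun_prop)) ?_
    filter_upwards [ae_restrict_mem measurableSet_Ioo] with r ⟨hr0, hru⟩
    have := sub_pos.2 hru
    rw [Real.norm_of_nonneg (by positivity)]
    exact mul_le_mul_of_nonneg_right (Real.rpow_le_rpow_of_nonpos hr0 hru.le hp) (by positivity)
  exact not_integrableOn_Ioo_sub_rpow hu ha
    ((integrable_const_mul_iff (Real.rpow_pos_of_pos hu p).ne'.isUnit _).1 hdom)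

section BetaSubst

variable {u v t : ℝ}

noncomputable def betaSubst (u v t : ℝ) : ℝ := u * v * (1 - t) / (v - u * t)

lemma sub_mul_pos_of_lt_one (hu : 0 < u) (huv : u ≤ v) (ht : t < 1) : 0 < v - u * t := by
  nlinarith

lemma sub_betaSubst_left (hD : v - u * t ≠ 0) :
    u - betaSubst u v t = u * t * (v - u) / (v - u * t) := by
  rw [betaSubst]; field_simp; ring

lemma sub_betaSubst_right (hD : v - u * t ≠ 0) :
    v - betaSubst u v t = v * (v - u) / (v - u * t) := by
  rw [betaSubst]; field_simp; ring

lemma hasDerivAt_betaSubst (hD : v - u * t ≠ 0) :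
    HasDerivAt (betaSubst u v) (-(u * v * (v - u)) / (v - u * t) ^ 2) t := by
  have hnum : HasDerivAt (fun t : ℝ => u * v * (1 - t)) (-(u * v)) t := by
    simpa using ((hasDerivAt_id t).const_sub 1).const_mul (u * v)
  have hden : HasDerivAt (fun t : ℝ => v - u * t) (-u) t := by
    simpa using ((hasDerivAt_id t).const_mul u).const_sub v
  exact (hnum.div hden hD).congr_deriv (by ring)

lemma injOn_betaSubst (hu : 0 < u) (huv : u < v) : InjOn (betaSubst u v) (Ioo 0 1) := by
  intro a ha b hb hab
  rw [betaSubst, betaSubst, div_eq_div_iff (sub_mul_pos_of_lt_one hu huv.le ha.2).ne'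
    (sub_mul_pos_of_lt_one hu huv.le hb.2).ne'] at hab
  have hprod : (a - b) * (u * v * (v - u)) = 0 := by linear_combination -hab
  have hne : u * v * (v - u) ≠ 0 := by
    have := sub_pos.2 huv; have := hu.trans huv; positivity
  exact sub_eq_zero.1 ((mul_eq_zero.1 hprod).resolve_right hne)

lemma image_betaSubst (hu : 0 < u) (huv : u < v) : betaSubst u v '' Ioo 0 1 = Ioo 0 u := by
  have hv : 0 < v := hu.trans huv
  have hvu : 0 < v - u := sub_pos.2 huv
  ext r
  constructor
  · rintro ⟨t, ht, rfl⟩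
    have hD := sub_mul_pos_of_lt_one hu huv.le ht.2
    refine ⟨div_pos ?_ hD, sub_pos.1 ?_⟩
    · have := sub_pos.2 ht.2; positivity
    · rw [sub_betaSubst_left hD.ne']; have := ht.1; positivity
  · rintro ⟨hr0, hru⟩
    have hvr : 0 < v - r := by linarith
    -- the inverse Möbius map
    refine ⟨v * (u - r) / (u * (v - r)), ⟨?_, ?_⟩, ?_⟩
    · have := sub_pos.2 hru; positivity
    · rw [div_lt_one (by positivity)]; nlinarith
    · have := hvr.ne'; have := hvu.ne'
      rw [betaSubst]; field_simp; grind

end BetaSubst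

lemma mul_rpow_mul_rpow_mul_rpow_of_add_eq {A B C T S D p q s : ℝ} (hA : 0 < A) (hB : 0 < B)
    (hC : 0 < C) (hT : 0 < T) (hS : 0 < S) (hD : 0 < D) (hpqs : p + q + s = -2) :
    A * B * C / D ^ 2 * ((A * B * S / D) ^ p * (A * T * C / D) ^ q * (B * C / D) ^ s)
      = C ^ (q + s + 1) * A ^ (p + q + 1) * B ^ (p + s + 1) * (T ^ q * S ^ p) := by
  apply Real.log_injOn_pos (by simp only [mem_Ioi]; positivity)
    (by simp only [mem_Ioi]; positivity)
  simp (disch := positivity) only [Real.log_mul, Real.log_div, Real.log_rpow, Real.log_pow]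
  linear_combination (-(Real.log D)) * hpqs

theorem integral_rpow_mul_sub_rpow_mul_sub_rpow {u v p q s : ℝ} (hu : 0 < u) (huv : u < v)
    (hpqs : p + q + s = -2) :
    ∫ r in Ioo 0 u, r ^ p * (u - r) ^ q * (v - r) ^ s
      = (v - u) ^ (q + s + 1) * u ^ (p + q + 1) * v ^ (p + s + 1)
          * ∫ t in Ioo 0 1, t ^ q * (1 - t) ^ p := by
  have hD : ∀ t ∈ Ioo (0 : ℝ) 1, 0 < v - u * t :=
    fun t ht ↦ sub_mul_pos_of_lt_one hu huv.le ht.2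
  rw [← image_betaSubst hu huv, integral_image_eq_integral_abs_deriv_smul measurableSet_Ioo
    (fun t ht ↦ (hasDerivAt_betaSubst (hD t ht).ne').hasDerivWithinAt) (injOn_betaSubst hu huv),
    ← integral_const_mul]
  refine setIntegral_congr_fun measurableSet_Ioo fun t ht ↦ ?_
  have hv : 0 < v := hu.trans huv
  have hvu : 0 < v - u := sub_pos.2 huv
  rw [smul_eq_mul, sub_betaSubst_left (hD t ht).ne', sub_betaSubst_right (hD t ht).ne',
    neg_div, abs_neg, abs_of_pos (by have := hD t ht; positivity), betaSubst]
  exact mul_rpow_mul_rpow_mul_rpow_of_add_eq hu hv hvu ht.1 (sub_pos.2 ht.2)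
    (hD t ht) hpqs

theorem stmt_0_general (H1 H2 u v : ℝ)
    (hH1 : 1/2 < H1 ∧ H1 < 1) (hH2 : 1/2 < H2 ∧ H2 < 1)
    (hu : 0 < u) (huv : u ≤ v) :
    ∫ r in Set.Ioo (0:ℝ) u,
        r ^ (1 - H1 - H2) * (u - r) ^ (H1 - 3/2) * (v - r) ^ (H2 - 3/2)
      = (v - u) ^ (H1 + H2 - 2) * u ^ (1/2 - H2) * v ^ (1/2 - H1)
          * Beta (H1 - 1/2) (2 - H1 - H2) := by
  obtain ⟨hH1, hH1'⟩ := hH1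
  obtain ⟨hH2, hH2'⟩ := hH2
  rcases huv.eq_or_lt with rfl | huv
  · rw [sub_self, Real.zero_rpow (by linarith : H1 + H2 - 2 < 0).ne, zero_mul, zero_mul, zero_mul]
    have hcomb : EqOn
        (fun r : ℝ => r ^ (1 - H1 - H2) * (u - r) ^ (H1 - 3/2) * (u - r) ^ (H2 - 3/2))
        (fun r : ℝ => r ^ (1 - H1 - H2) * (u - r) ^ (H1 + H2 - 3)) (Ioo 0 u) := by
      intro r ⟨_, hru⟩
      dsimp only
      rw [mul_assoc, ← Real.rpow_add (sub_pos.2 hru)]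
      ring_nf
    rw [setIntegral_congr_fun measurableSet_Ioo hcomb]
    exact integral_undef
      (not_integrableOn_Ioo_rpow_mul_sub_rpow hu (by linarith) (by linarith))
  · rw [integral_rpow_mul_sub_rpow_mul_sub_rpow hu huv (by ring), Beta]
    congr 1 <;> ring_nf

theorem stmt_0 (H1 H2 u v : ℝ)
    (hH1 : 1/2 < H1 ∧ H1 < 1) (hH2 : 1/2 < H2 ∧ H2 < 1) (hsum : H1 + H2 < 2)
    (hu : 0 < u) (huv : u ≤ v) :
    ∫ r in Set.Ioo (0:ℝ) u,
        r ^ (1 - H1 - H2) * (u - r) ^ (H1 - 3/2) * (v - r) ^ (H2 - 3/2)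
      = (v - u) ^ (H1 + H2 - 2) * u ^ (1/2 - H2) * v ^ (1/2 - H1)
          * Beta (H1 - 1/2) (2 - H1 - H2) :=
  stmt_0_general H1 H2 u v hH1 hH2 hu huv
end

section
/- Let 1/2 < H < 1 and let c_H² = H(2H-1)/B(2-2H, H-1/2). Then for all s,t ≥ 0, c_H² · B(H-1/2, 2-2H) · ∫₀^t ∫₀^s |u-v|^{2H-2} dv du = (1/2)(t^{2H} + s^{2H} - |t-s|^{2H}). -/
/-!
With `α = 2H - 2 > -1`, put `φ(x) = x|x|^α / (α + 1)` and `ψ(x) = |x|^(α+2) / ((α+1)(α+2))`.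
Then `φ' = |x|^α` away from `0` and `ψ' = φ` everywhere, so the inner integral is
`φ(u) - φ(u - s)` and the double integral is `ψ(t) + ψ(s) - ψ(t - s)`. The constant collapses
because `B(a, b) = Γ(a)Γ(b)/Γ(a+b)` is symmetric and positive.
-/

open MeasureTheory Set

lemma ofReal_Beta (a b : ℝ) : (Beta a b : ℂ) = Complex.betaIntegral a b := by
  rw [Beta, ← integral_Ioc_eq_integral_Ioo, ← intervalIntegral.integral_of_le zero_le_one,
    Complex.betaIntegral, ← intervalIntegral.integral_ofReal]
  refine intervalIntegral.integral_congr fun x hx => ?_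
  rw [uIcc_of_le zero_le_one] at hx
  push_cast [Complex.ofReal_cpow hx.1, Complex.ofReal_cpow (sub_nonneg.2 hx.2)]
  rfl

lemma Beta_eq_Gamma_mul_Gamma_div {a b : ℝ} (ha : 0 < a) (hb : 0 < b) :
    Beta a b = Real.Gamma a * Real.Gamma b / Real.Gamma (a + b) := by
  have h := Complex.Gamma_mul_Gamma_eq_betaIntegral (s := a) (t := b) (by simpa) (by simpa)
  rw [← ofReal_Beta, ← Complex.ofReal_add, Complex.Gamma_ofReal, Complex.Gamma_ofReal,
    Complex.Gamma_ofReal] at h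
  rw [eq_div_iff (Real.Gamma_pos_of_pos (by linarith)).ne']
  exact_mod_cast (h.trans (mul_comm _ _)).symm

lemma Beta_comm (a b : ℝ) : Beta a b = Beta b a := by
  exact_mod_cast (ofReal_Beta a b).trans
    ((Complex.betaIntegral_symm _ _).trans (ofReal_Beta b a).symm)

lemma Beta_pos {a b : ℝ} (ha : 0 < a) (hb : 0 < b) : 0 < Beta a b := by
  rw [Beta_eq_Gamma_mul_Gamma_div ha hb]
  exact div_pos (mul_pos (Real.Gamma_pos_of_pos ha) (Real.Gamma_pos_of_pos hb))
    (Real.Gamma_pos_of_pos (add_pos ha hb))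

section AbsRpow

variable {α : ℝ}

lemma hasDerivAt_abs_rpow_add_two (hα : -1 < α) (x : ℝ) :
    HasDerivAt (fun x : ℝ => |x| ^ (α + 2)) ((α + 2) * (x * |x| ^ α)) x := by
  convert hasDerivAt_abs_rpow x (p := α + 2) (by linarith) using 1
  rw [add_sub_cancel_right]; ring

lemma continuous_mul_abs_rpow (hα : -1 < α) : Continuous fun x : ℝ => x * |x| ^ α := by
  have h := (contDiff_norm_rpow (E := ℝ) (p := α + 2) (by linarith)).continuous_deriv le_rfl
  simp only [Real.norm_eq_abs] at h
  rw [funext fun x => (hasDerivAt_abs_rpow_add_two hα x).deriv] at h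
  convert h.div_const (α + 2) using 2 with x
  field_simp [show α + 2 ≠ 0 by linarith]

lemma hasDerivAt_mul_abs_rpow {x : ℝ} (hx : x ≠ 0) :
    HasDerivAt (fun x : ℝ => x * |x| ^ α) ((α + 1) * |x| ^ α) x := by
  have hpow := (hasDerivAt_abs hx).rpow_const (p := α) (Or.inl (abs_ne_zero.2 hx))
  refine ((hasDerivAt_id x).mul hpow).congr_deriv ?_
  rw [Real.rpow_sub_one (abs_ne_zero.2 hx), id]
  field_simp
  rw [← self_mul_sign x]; ring

lemma intervalIntegrable_abs_rpow (hα : -1 < α) (a b : ℝ) :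
    IntervalIntegrable (fun x : ℝ => |x| ^ α) volume a b := by
  have h₀ : ∀ c : ℝ, IntervalIntegrable (fun x : ℝ => |x| ^ α) volume 0 c := fun c => by
    have h := intervalIntegral.intervalIntegrable_deriv_of_nonneg (a := 0) (b := c)
      (continuous_mul_abs_rpow hα).continuousOn
      (fun x hx => hasDerivAt_mul_abs_rpow (α := α) (x := x) ?_)
      (fun x _ => mul_nonneg (by linarith) (by positivity))
    · simpa [inv_mul_cancel_left₀ (show α + 1 ≠ 0 by linarith)] using h.const_mul (α + 1)⁻¹
    · rintro rfl
      simp only [mem_Ioo, min_lt_iff, lt_max_iff, lt_self_iff_false, false_or] at hx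
      linarith [hx.1, hx.2]
  exact (h₀ a).symm.trans (h₀ b)

lemma integral_abs_rpow (hα : -1 < α) (a b : ℝ) :
    ∫ x in a..b, |x| ^ α = (b * |b| ^ α - a * |a| ^ α) / (α + 1) := by
  rw [eq_div_iff (by linarith), ← intervalIntegral.integral_mul_const]
  refine integral_eq_of_hasDerivAt_off_countable _ _ (countable_singleton 0)
    (continuous_mul_abs_rpow hα).continuousOn (fun x hx => ?_)
    ((intervalIntegrable_abs_rpow hα a b).mul_const _)
  rw [mul_comm]
  exact hasDerivAt_mul_abs_rpow hx.2

lemma integral_mul_abs_rpow (hα : -1 < α) (a b : ℝ) :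
    ∫ x in a..b, x * |x| ^ α = (|b| ^ (α + 2) - |a| ^ (α + 2)) / (α + 2) := by
  rw [eq_div_iff (by linarith), ← intervalIntegral.integral_mul_const]
  refine intervalIntegral.integral_eq_sub_of_hasDerivAt (f := fun x : ℝ => |x| ^ (α + 2))
    (fun x _ => ?_) ((continuous_mul_abs_rpow hα).intervalIntegrable a b |>.mul_const _)
  rw [mul_comm]
  exact hasDerivAt_abs_rpow_add_two hα x

lemma integral_integral_abs_sub_rpow (hα : -1 < α) (s t : ℝ) :
    ∫ u in 0..t, ∫ v in 0..s, |u - v| ^ α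
      = (|t| ^ (α + 2) + |s| ^ (α + 2) - |t - s| ^ (α + 2)) / ((α + 1) * (α + 2)) := by
  have hφ := continuous_mul_abs_rpow hα
  have hφs : Continuous fun u : ℝ => (u - s) * |u - s| ^ α := hφ.comp (continuous_sub_right s)
  have inner : ∀ u : ℝ,
      ∫ v in 0..s, |u - v| ^ α = (u * |u| ^ α - (u - s) * |u - s| ^ α) / (α + 1) := fun u => by
    rw [intervalIntegral.integral_comp_sub_left (fun x => |x| ^ α), integral_abs_rpow hα, sub_zero]
  simp_rw [inner]
  rw [intervalIntegral.integral_div, intervalIntegral.integral_sub (hφ.intervalIntegrable 0 t)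
      (hφs.intervalIntegrable 0 t),
    intervalIntegral.integral_comp_sub_right (fun x => x * |x| ^ α),
    integral_mul_abs_rpow hα, integral_mul_abs_rpow hα]
  rw [zero_sub, abs_neg, abs_zero, Real.zero_rpow (by linarith)]
  field_simp
  ring

end AbsRpow

theorem stmt_1 (H cH2 : ℝ) (hH : 1/2 < H ∧ H < 1)
    (hc : cH2 = H * (2*H - 1) / Beta (2 - 2*H) (H - 1/2)) :
    ∀ s t : ℝ, 0 ≤ s → 0 ≤ t →
      cH2 * Beta (H - 1/2) (2 - 2*H)
          * ∫ u in Set.Ioo (0:ℝ) t, ∫ v in Set.Ioo (0:ℝ) s, |u - v| ^ (2*H - 2)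
        = (1/2) * (t ^ (2*H) + s ^ (2*H) - |t - s| ^ (2*H)) := by
  obtain ⟨hH₁, hH₂⟩ := hH
  intro s t hs ht
  have hconst : cH2 * Beta (H - 1/2) (2 - 2*H) = H * (2*H - 1) := by
    rw [hc, Beta_comm, div_mul_cancel₀ _ (Beta_pos (by linarith) (by linarith)).ne']
  simp_rw [← integral_Ioc_eq_integral_Ioo, ← intervalIntegral.integral_of_le hs,
    ← intervalIntegral.integral_of_le ht]
  rw [hconst, integral_integral_abs_sub_rpow (by linarith), abs_of_nonneg hs, abs_of_nonneg ht,
    show 2*H - 2 + 2 = 2*H by ring, show 2*H - 2 + 1 = 2*H - 1 by ring]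
  have h₁ : H * 2 - 1 ≠ 0 := by linarith
  field_simp
end
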